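/- For 2×2 matrices, the pointwise algebraic identity |dev(R G)| = |sym(G)| and |R G - α I| = |G - α J| holds for all α ∈ ℝ, where G is any 2×2 matrix, R = [[0,1],[-1,0]] is rotation by -90°, acting so that R G corresponds to the rotated gradient ∇⊥ψ when G = ∇ψ, sym(G) = (G + Gᵀ)/2, dev(M) = M - (tr M/2) I, and J = [[0,1],[-1,0]]. -/

import Mathlib

open Matrix BigOperators MeasureTheory RealInnerProductSpace

noncomputable def frob (τ : Matrix (Fin 2) (Fin 2) ℝ) : ℝ :=
  Real.sqrt (∑ i, ∑ j, (τ i j) ^ 2)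

noncomputable def finner (A B : Matrix (Fin 2) (Fin 2) ℝ) : ℝ :=
  ∑ i, ∑ j, A i j * B i j

noncomputable def asym (τ : Matrix (Fin 2) (Fin 2) ℝ) : Matrix (Fin 2) (Fin 2) ℝ :=
  (1 / 2 : ℝ) • (τ - τᵀ)

noncomputable def symMat (τ : Matrix (Fin 2) (Fin 2) ℝ) : Matrix (Fin 2) (Fin 2) ℝ :=
  (1 / 2 : ℝ) • (τ + τᵀ)

noncomputable def devm (τ : Matrix (Fin 2) (Fin 2) ℝ) : Matrix (Fin 2) (Fin 2) ℝ :=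
  τ - (τ.trace / 2) • (1 : Matrix (Fin 2) (Fin 2) ℝ)

noncomputable def Acomp (μ lam : ℝ) (τ : Matrix (Fin 2) (Fin 2) ℝ) :
    Matrix (Fin 2) (Fin 2) ℝ :=
  (1 / (2 * μ)) • (τ - (lam / (2 * (μ + lam)) * τ.trace) • (1 : Matrix (Fin 2) (Fin 2) ℝ))

noncomputable def Jm : Matrix (Fin 2) (Fin 2) ℝ := !![0, 1; -1, 0]

noncomputable def rotm (G : Matrix (Fin 2) (Fin 2) ℝ) : Matrix (Fin 2) (Fin 2) ℝ :=
  Matrix.of fun i j => if j = 0 then G i 1 else -(G i 0)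

/-!
The column rotation `G ↦ RG` permutes the columns of `G` up to sign, so it
preserves the Frobenius norm. It is linear, maps `J` to `I`, and intertwines the two projections:
`dev (R G) = R (sym G)`. Both identities follow by applying the isometry.
-/

theorem frob_rotm (G : Matrix (Fin 2) (Fin 2) ℝ) : frob (rotm G) = frob G := by
  unfold frob rotm
  congr 1
  simp only [Fin.sum_univ_two, of_apply, Fin.isValue, if_true, one_ne_zero, if_false, neg_sq]
  ring

theorem rotm_sub (G H : Matrix (Fin 2) (Fin 2) ℝ) : rotm (G - H) = rotm G - rotm H := by
  ext i j
  fin_cases j <;> simp [rotm, neg_add_eq_sub]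

theorem rotm_smul (c : ℝ) (G : Matrix (Fin 2) (Fin 2) ℝ) : rotm (c • G) = c • rotm G := by
  ext i j
  fin_cases j <;> simp [rotm]

theorem rotm_Jm : rotm Jm = 1 := by
  ext i j
  fin_cases i <;> fin_cases j <;> simp [rotm, Jm]

theorem devm_rotm (G : Matrix (Fin 2) (Fin 2) ℝ) : devm (rotm G) = rotm (symMat G) := by
  ext i j
  fin_cases i <;> fin_cases j <;> simp [devm, rotm, symMat, trace, Fin.sum_univ_two] <;> ring

/-- pointwise identities |dev(R G)| = |sym(G)| and |R G - αI| = |G - αJ|. -/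
theorem rotation_interchanges_dev_sym (G : Matrix (Fin 2) (Fin 2) ℝ) :
    frob (devm (rotm G)) = frob (symMat G) ∧
    ∀ α : ℝ, frob (rotm G - α • (1 : Matrix (Fin 2) (Fin 2) ℝ)) = frob (G - α • Jm) := by
  refine ⟨by rw [devm_rotm, frob_rotm], fun α => ?_⟩
  rw [← rotm_Jm, ← rotm_smul, ← rotm_sub, frob_rotm]
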